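/- arXiv:1302.4546 — 4 statements merged into one kernel-verified Lean document; each statement's English description precedes it below -/
import Mathlib

section
/- The set function F1(S) = nL − Σ_{u ∈ V∖S} h^L_{uS} is nondecreasing: for S ⊆ T ⊆ V, F1(S) ≤ F1(T), and F1(∅) = 0. -/
open scoped BigOperators

/-- Transition probability of the simple random walk. -/
noncomputable def transP {V : Type*} [Fintype V] [DecidableEq V] (G : SimpleGraph V)
    [DecidableRel G.Adj] (u w : V) : ℝ :=
  if G.Adj u w then 1 / (G.degree u : ℝ) else 0

/-- The generalized `L`-truncated hitting time `h^L_{uS}`, defined recursively: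
`h^0_{uS} = 0`; for `L ≥ 1`, `h^L_{uS} = 0` if `u ∈ S`, and
`h^L_{uS} = 1 + ∑_{w ∈ V∖S} p_{uw} h^{L-1}_{wS}` otherwise. -/
noncomputable def hT {V : Type*} [Fintype V] [DecidableEq V] (G : SimpleGraph V)
    [DecidableRel G.Adj] : ℕ → V → Finset V → ℝ
  | 0, _, _ => 0
  | (L + 1), u, S => if u ∈ S then 0 else 1 + ∑ w ∈ Sᶜ, transP G u w * hT G L w S

/-- The objective function `F1(S) = nL − ∑_{u ∈ V∖S} h^L_{uS}`. -/
noncomputable def F1 {V : Type*} [Fintype V] [DecidableEq V] (G : SimpleGraph V)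
    [DecidableRel G.Adj] (L : ℕ) (S : Finset V) : ℝ :=
  (Fintype.card V : ℝ) * L - ∑ u ∈ Sᶜ, hT G L u S

/-!
Enlarging `S` shrinks both the range `V ∖ S` of the sum and, by induction on `L`, every
truncated hitting time, since all terms involved are nonnegative. For `S = ∅` the walk is never
stopped and the transition probabilities out of each vertex sum to one, so `h^L_{u∅} = L`.
-/

open Finset

theorem Finset.antitone_sum_compl {α M : Type*} [Fintype α] [DecidableEq α] [AddCommMonoid M]
    [PartialOrder M] [IsOrderedAddMonoid M] {f : Finset α → α → M}
    (hf_nonneg : ∀ S a, 0 ≤ f S a) (hf : ∀ a, Antitone (f · a)) :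
    Antitone fun S => ∑ a ∈ Sᶜ, f S a := by
  intro S T hST
  calc ∑ a ∈ Tᶜ, f T a
      ≤ ∑ a ∈ Tᶜ, f S a := sum_le_sum fun a _ => hf a hST
    _ ≤ ∑ a ∈ Sᶜ, f S a :=
        sum_le_sum_of_subset_of_nonneg (compl_subset_compl.mpr hST) fun a _ _ => hf_nonneg S a

section RandomWalk

variable {V : Type*} [Fintype V] [DecidableEq V] (G : SimpleGraph V) [DecidableRel G.Adj]

theorem transP_nonneg (u w : V) : 0 ≤ transP G u w := by
  unfold transP; split <;> positivity

theorem sum_transP_eq_one {u : V} (hu : (G.neighborFinset u).Nonempty) :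
    ∑ w, transP G u w = 1 := by
  have hdeg : (G.degree u : ℝ) ≠ 0 := by
    rw [← SimpleGraph.card_neighborFinset_eq_degree]
    exact_mod_cast hu.card_pos.ne'
  simp only [transP, ← sum_filter, sum_const, nsmul_eq_mul, mul_one_div]
  rw [show univ.filter (G.Adj u) = G.neighborFinset u by ext; simp,
    SimpleGraph.card_neighborFinset_eq_degree, div_self hdeg]

theorem hT_nonneg (L : ℕ) (u : V) (S : Finset V) : 0 ≤ hT G L u S := by
  induction L generalizing u with
  | zero => exact le_rfl
  | succ L ih =>
    simp only [hT]
    split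
    · exact le_rfl
    · have := sum_nonneg fun w (_ : w ∈ Sᶜ) => mul_nonneg (transP_nonneg G u w) (ih w)
      linarith

theorem hT_antitone (L : ℕ) (u : V) : Antitone (hT G L u) := by
  induction L generalizing u with
  | zero => exact fun _ _ _ => le_rfl
  | succ L ih =>
    intro S T hST
    by_cases huT : u ∈ T
    · simpa [hT, huT] using hT_nonneg G (L + 1) u S
    · have huS : u ∉ S := fun h => huT (hST h)
      simp only [hT, huT, huS, if_false, add_le_add_iff_left]
      exact antitone_sum_compl (f := fun S w => transP G u w * hT G L w S)
        (fun S w => mul_nonneg (transP_nonneg G u w) (hT_nonneg G L w S))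
        (fun w _ _ h => mul_le_mul_of_nonneg_left (ih w h) (transP_nonneg G u w)) hST

theorem hT_empty (hG : ∀ v : V, (G.neighborFinset v).Nonempty) (L : ℕ) (u : V) :
    hT G L u ∅ = L := by
  induction L generalizing u with
  | zero => simp [hT]
  | succ L ih =>
    simp only [hT, notMem_empty, if_false, compl_empty, ih, ← sum_mul,
      sum_transP_eq_one G (hG u)]
    push_cast; ring

theorem F1_empty (hG : ∀ v : V, (G.neighborFinset v).Nonempty) (L : ℕ) : F1 G L ∅ = 0 := by
  simp [F1, hT_empty G hG]

theorem F1_mono (L : ℕ) : Monotone (F1 G L) := fun _ _ hST =>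
  sub_le_sub_left (antitone_sum_compl (f := fun S u => hT G L u S)
    (fun S u => hT_nonneg G L u S) (hT_antitone G L) hST) _

end RandomWalk

/-- `F1` is nondecreasing, with `F1(∅) = 0`. -/
theorem F1_monotone {V : Type*} [Fintype V] [DecidableEq V] (G : SimpleGraph V)
    [DecidableRel G.Adj] (hG : ∀ v : V, (G.neighborFinset v).Nonempty) (L : ℕ) :
    F1 G L (∅ : Finset V) = 0 ∧
      ∀ S T : Finset V, S ⊆ T → F1 G L S ≤ F1 G L T :=
  ⟨F1_empty G hG L, fun _ _ hST => F1_mono G L hST⟩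
end

section
/- The set function F1(S) = nL − Σ_{u ∈ V∖S} h^L_{uS} is submodular: for all S ⊆ T ⊆ V and u ∈ V∖T, F1(S ∪ {u}) − F1(S) ≥ F1(T ∪ {u}) − F1(T). -/
open scoped BigOperators

/-!
Let `q_k(v, S)` be the weight of the walks of length `k` from `v` that avoid `S`. Unfolding
the recursion gives `h^L_{vS} = ∑_{k<L} q_k(v, S)`, so `F1(S) = ∑_v ∑_{k<L} (1 - q_k(v, S))`,
and it suffices that every `q_k(v, ·)` is supermodular. By induction on `k` this holds for any
nonnegative kernel: adding `u` to the avoided set removes the walks that avoid the set but visit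
`u`, and there are fewer of those the larger the set.
-/

open Finset

section Survival

variable {V : Type*} [Fintype V] [DecidableEq V] (p : V → V → ℝ)

noncomputable def survival : ℕ → V → Finset V → ℝ
  | 0, v, S => if v ∈ S then 0 else 1
  | k + 1, v, S => if v ∈ S then 0 else ∑ w, p v w * survival k w S

variable {p}

theorem survival_of_mem {v : V} {S : Finset V} (hv : v ∈ S) (k : ℕ) : survival p k v S = 0 := by
  cases k <;> simp [survival, hv]

theorem survival_zero_of_notMem {v : V} {S : Finset V} (hv : v ∉ S) : survival p 0 v S = 1 := by
  simp [survival, hv]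

theorem survival_succ_of_notMem {v : V} {S : Finset V} (hv : v ∉ S) (k : ℕ) :
    survival p (k + 1) v S = ∑ w, p v w * survival p k w S := by
  simp [survival, hv]

theorem sum_compl_mul_survival (f : V → ℝ) (k : ℕ) (S : Finset V) :
    ∑ w ∈ Sᶜ, f w * survival p k w S = ∑ w, f w * survival p k w S :=
  sum_subset (subset_univ _) fun w _ hw ↦ by
    rw [survival_of_mem (by simpa using hw), mul_zero]

theorem survival_nonneg (hp : ∀ v w, 0 ≤ p v w) (k : ℕ) (v : V) (S : Finset V) :
    0 ≤ survival p k v S := by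
  induction k generalizing v with
  | zero => unfold survival; split <;> norm_num
  | succ k ih =>
    by_cases hv : v ∈ S
    · rw [survival_of_mem hv]
    · rw [survival_succ_of_notMem hv]
      exact sum_nonneg fun w _ ↦ mul_nonneg (hp v w) (ih w)

theorem survival_anti (hp : ∀ v w, 0 ≤ p v w) {S T : Finset V} (hST : S ⊆ T) (k : ℕ)
    (v : V) :
    survival p k v T ≤ survival p k v S := by
  induction k generalizing v with
  | zero =>
    unfold survival
    split_ifs <;> simp_all [subset_iff]
  | succ k ih =>
    by_cases hvT : v ∈ T
    · rw [survival_of_mem hvT]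
      exact survival_nonneg hp _ v S
    have hvS : v ∉ S := fun h ↦ hvT (hST h)
    rw [survival_succ_of_notMem hvT, survival_succ_of_notMem hvS]
    exact sum_le_sum fun w _ ↦ mul_le_mul_of_nonneg_left (ih w) (hp v w)

theorem survival_supermodular (hp : ∀ v w, 0 ≤ p v w) {S T : Finset V} (hST : S ⊆ T) {u : V}
    (hu : u ∉ T) (k : ℕ) (v : V) :
    survival p k v T - survival p k v (insert u T) ≤
      survival p k v S - survival p k v (insert u S) := by
  induction k using Nat.strong_induction_on generalizing v with
  | _ k ih =>
  by_cases hvu : v = u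
  · subst hvu
    simp only [survival_of_mem (mem_insert_self v _), sub_zero]
    exact survival_anti hp hST k v
  by_cases hvT : v ∈ T
  · rw [survival_of_mem hvT, survival_of_mem (mem_insert_of_mem hvT), sub_self, sub_nonneg]
    exact survival_anti hp (subset_insert u S) k v
  have hvS : v ∉ S := fun h ↦ hvT (hST h)
  have hvuT : v ∉ insert u T := by simp [hvu, hvT]
  have hvuS : v ∉ insert u S := by simp [hvu, hvS]
  cases k with
  | zero =>
    rw [survival_zero_of_notMem hvT, survival_zero_of_notMem hvuT, survival_zero_of_notMem hvS,
      survival_zero_of_notMem hvuS]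
  | succ k =>
    simp only [survival_succ_of_notMem, hvT, hvS, hvuT, hvuS, not_false_eq_true,
      ← sum_sub_distrib, ← mul_sub]
    exact sum_le_sum fun w _ ↦ mul_le_mul_of_nonneg_left (ih k k.lt_succ_self w) (hp v w)

end Survival

section HittingTime

variable {V : Type*} [Fintype V] [DecidableEq V] (G : SimpleGraph V) [DecidableRel G.Adj]

theorem hT_eq_sum_survival (S : Finset V) (L : ℕ) (v : V) :
    hT G L v S = ∑ k ∈ range L, survival (transP G) k v S := by
  induction L generalizing v with
  | zero => simp [hT]
  | succ L ih =>
    by_cases hv : v ∈ S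
    · simp [hT, hv, survival_of_mem hv]
    calc hT G (L + 1) v S
          = 1 + ∑ w ∈ Sᶜ, transP G v w * ∑ k ∈ range L, survival (transP G) k w S := by
          rw [hT, if_neg hv]; simp only [ih]
      _ = 1 + ∑ k ∈ range L, survival (transP G) (k + 1) v S := by
          simp only [mul_sum, survival_succ_of_notMem hv]
          rw [sum_comm]
          simp only [sum_compl_mul_survival]
      _ = ∑ k ∈ range (L + 1), survival (transP G) k v S := by
          rw [sum_range_succ', survival_zero_of_notMem hv, add_comm]

theorem sum_compl_hT (L : ℕ) (S : Finset V) :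
    ∑ v ∈ Sᶜ, hT G L v S = ∑ v, ∑ k ∈ range L, survival (transP G) k v S := by
  simp only [hT_eq_sum_survival]
  exact sum_subset (subset_univ _) fun v _ hv ↦
    sum_eq_zero fun k _ ↦ survival_of_mem (by simpa using hv) k

theorem F1_insert_sub_F1 (L : ℕ) (S : Finset V) (u : V) :
    F1 G L (insert u S) - F1 G L S = ∑ v, ∑ k ∈ range L,
      (survival (transP G) k v S - survival (transP G) k v (insert u S)) := by
  simp only [F1, sum_compl_hT, sub_sub_sub_cancel_left, ← sum_sub_distrib]

end HittingTime

theorem F1_submodular_general {V : Type*} [Fintype V] [DecidableEq V] (G : SimpleGraph V)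
    [DecidableRel G.Adj] (L : ℕ)
    (S T : Finset V) (hST : S ⊆ T) (u : V) (hu : u ∉ T) :
    F1 G L (insert u T) - F1 G L T ≤ F1 G L (insert u S) - F1 G L S := by
  rw [F1_insert_sub_F1, F1_insert_sub_F1]
  exact sum_le_sum fun v _ ↦ sum_le_sum fun k _ ↦
    survival_supermodular (transP_nonneg G) hST hu k v

/-- `F1` is submodular: for `S ⊆ T ⊆ V` and `u ∈ V∖T`,
`F1(S ∪ {u}) − F1(S) ≥ F1(T ∪ {u}) − F1(T)`. -/
theorem F1_submodular {V : Type*} [Fintype V] [DecidableEq V] (G : SimpleGraph V)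
    [DecidableRel G.Adj] (hG : ∀ v : V, (G.neighborFinset v).Nonempty) (L : ℕ)
    (S T : Finset V) (hST : S ⊆ T) (u : V) (hu : u ∉ T) :
    F1 G L (insert u T) - F1 G L T ≤ F1 G L (insert u S) - F1 G L S :=
  F1_submodular_general G L S T hST u hu
end

section
/- For fixed S and u, the difference of marginal gains of F2 satisfies the identity ρ_u(S) − ρ_u(T) = Σ_{w∈V} (1 − Π_{v∈T∖S}(1 − p^L_{wv})) · p^L_{wu} · Π_{v∈S}(1 − p^L_{wv}) for S ⊆ T ⊆ V and u ∉ T, where ρ_u(S) = F2(S∪{u}) − F2(S); in particular this difference is nonnegative. -/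
open scoped BigOperators

/-- Hitting probability of a set: `p^L_{wS} = 1 − ∏_{v∈S}(1 − p^L_{wv})`. -/
def pSet {V : Type*} [Fintype V] (q : V → V → ℝ) (w : V) (S : Finset V) : ℝ :=
  1 - ∏ v ∈ S, (1 - q w v)

/-- The objective function `F2(S) = ∑_{w∈V} p^L_{wS}`. -/
def F2 {V : Type*} [Fintype V] (q : V → V → ℝ) (S : Finset V) : ℝ :=
  ∑ w : V, pSet q w S

/-- The marginal gain `ρ_u(S) = F2(S ∪ {u}) − F2(S)`. -/
def rho {V : Type*} [Fintype V] [DecidableEq V] (q : V → V → ℝ) (u : V) (S : Finset V) : ℝ :=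
  F2 q (insert u S) - F2 q S

/-!
Adding `u ∉ A` multiplies the miss probability `∏_{v∈A}(1 − q w v)` of each `w` by `1 − q w u`,
so `ρ_u(A) = ∑_w q w u · ∏_{v∈A}(1 − q w v)`. Splitting the product over `T` as the product over
`S` times the product over `T \ S` gives the identity, and every factor of its summands lies in
`[0, 1]` or is `1` minus such a product, hence is nonnegative.
-/

open Finset

section

variable {V : Type*} [Fintype V] [DecidableEq V] (q : V → V → ℝ)

theorem rho_eq_sum_mul_prod {u : V} {A : Finset V} (hu : u ∉ A) :
    rho q u A = ∑ w : V, q w u * ∏ v ∈ A, (1 - q w v) := by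
  simp only [rho, F2, pSet, ← sum_sub_distrib, prod_insert hu]
  exact sum_congr rfl fun w _ => by ring

theorem rho_sub_rho_eq_sum {S T : Finset V} (hST : S ⊆ T) {u : V} (hu : u ∉ T) :
    rho q u S - rho q u T =
      ∑ w : V, (1 - ∏ v ∈ T \ S, (1 - q w v)) * q w u * ∏ v ∈ S, (1 - q w v) := by
  rw [rho_eq_sum_mul_prod q (fun h => hu (hST h)), rho_eq_sum_mul_prod q hu, ← sum_sub_distrib]
  refine sum_congr rfl fun w _ => ?_
  rw [← prod_sdiff hST]
  ring

end

theorem one_sub_prod_one_sub_nonneg {ι : Type*} (s : Finset ι) {p : ι → ℝ}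
    (hp : ∀ i ∈ s, p i ∈ Set.Icc (0 : ℝ) 1) : 0 ≤ 1 - ∏ i ∈ s, (1 - p i) :=
  sub_nonneg.mpr <| prod_le_one (fun i hi => sub_nonneg.mpr (hp i hi).2)
    (fun i hi => sub_le_self _ (hp i hi).1)

/-- for `S ⊆ T ⊆ V` and `u ∉ T`,
`ρ_u(S) − ρ_u(T) = ∑_w (1 − ∏_{v∈T∖S}(1 − p^L_{wv})) · p^L_{wu} · ∏_{v∈S}(1 − p^L_{wv})`,
and in particular this difference is nonnegative. -/
theorem rho_diff_eq {V : Type*} [Fintype V] [DecidableEq V] (q : V → V → ℝ)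
    (hq : ∀ w v : V, q w v ∈ Set.Icc (0 : ℝ) 1)
    (S T : Finset V) (hST : S ⊆ T) (u : V) (hu : u ∉ T) :
    rho q u S - rho q u T =
        ∑ w : V, (1 - ∏ v ∈ T \ S, (1 - q w v)) * q w u * ∏ v ∈ S, (1 - q w v) ∧
      0 ≤ rho q u S - rho q u T := by
  have hdiff := rho_sub_rho_eq_sum q hST hu
  refine ⟨hdiff, hdiff ▸ sum_nonneg fun w _ => ?_⟩
  have hmiss : 0 ≤ ∏ v ∈ S, (1 - q w v) :=
    prod_nonneg fun v _ => sub_nonneg.mpr (hq w v).2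
  exact mul_nonneg (mul_nonneg (one_sub_prod_one_sub_nonneg _ fun v _ => hq w v) (hq w u).1) hmiss
end

section
/- If f : Finset V → ℝ is a nondecreasing submodular function with f(∅) = 0, then the greedy algorithm that iteratively adds an element with maximum marginal gain for k steps returns a set S_k with f(S_k) ≥ (1 − (1 − 1/k)^k) · max_{|T| ≤ k} f(T) ≥ (1 − 1/e) · max_{|T| ≤ k} f(T). -/
/-! If the greedy set `A` falls short of `f T` by `d = f T - f A`, monotonicity and submodularity bound
`d` by the sum of the `|T| ≤ k` marginal gains `f (A ∪ {t}) - f A`, `t ∈ T`, each at most the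
greedy gain. So every greedy step closes at least a `1/k` fraction of the gap, the gap after
`k` steps is at most `(1 - 1/k)^k f T`, and `(1 - 1/k)^k ≤ 1/e`. -/

section Submodular

variable {V : Type*} [DecidableEq V] {f : Finset V → ℝ}

theorem sub_le_sum_marginal
    (hsub : ∀ S T : Finset V, S ⊆ T → ∀ u ∉ T, f (insert u T) - f T ≤ f (insert u S) - f S)
    (S T : Finset V) : f (S ∪ T) - f S ≤ ∑ t ∈ T, (f (insert t S) - f S) := by
  induction T using Finset.induction_on with
  | empty => simp
  | @insert a T ha ih =>
    rw [Finset.sum_insert ha, Finset.union_insert]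
    by_cases haS : a ∈ S
    · rw [Finset.insert_eq_self.mpr (Finset.mem_union_left T haS), Finset.insert_eq_self.mpr haS]
      linarith
    · have haST : a ∉ S ∪ T := by simp [haS, ha]
      linarith [hsub S (S ∪ T) Finset.subset_union_left a haST]

theorem sub_le_card_mul_of_marginal_le (hmono : ∀ S T : Finset V, S ⊆ T → f S ≤ f T)
    (hsub : ∀ S T : Finset V, S ⊆ T → ∀ u ∉ T, f (insert u T) - f T ≤ f (insert u S) - f S)
    {A : Finset V} {g : ℝ} (hg0 : 0 ≤ g) (hg : ∀ t ∉ A, f (insert t A) - f A ≤ g)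
    (T : Finset V) : f T - f A ≤ T.card * g := by
  have hmarginal : ∀ t ∈ T, f (insert t A) - f A ≤ g := fun t _ ↦ by
    by_cases ht : t ∈ A
    · simpa [Finset.insert_eq_self.mpr ht] using hg0
    · exact hg t ht
  calc f T - f A ≤ f (A ∪ T) - f A := by linarith [hmono T (A ∪ T) Finset.subset_union_right]
    _ ≤ ∑ t ∈ T, (f (insert t A) - f A) := sub_le_sum_marginal hsub A T
    _ ≤ ∑ _t ∈ T, g := Finset.sum_le_sum hmarginal
    _ = T.card * g := by rw [Finset.sum_const, nsmul_eq_mul]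

theorem sub_insert_le_of_greedy (hmono : ∀ S T : Finset V, S ⊆ T → f S ≤ f T)
    (hsub : ∀ S T : Finset V, S ⊆ T → ∀ u ∉ T, f (insert u T) - f T ≤ f (insert u S) - f S)
    {k : ℕ} (hk : 0 < k) {T A : Finset V} (hT : T.card ≤ k) {u : V}
    (hmax : ∀ w ∉ A, f (insert w A) - f A ≤ f (insert u A) - f A) :
    f T - f (insert u A) ≤ (1 - 1 / (k : ℝ)) * (f T - f A) := by
  set g := f (insert u A) - f A
  have hg0 : 0 ≤ g := sub_nonneg.mpr (hmono _ _ (Finset.subset_insert u A))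
  have hgap : f T - f A ≤ k * g :=
    (sub_le_card_mul_of_marginal_le hmono hsub hg0 hmax T).trans
      (mul_le_mul_of_nonneg_right (by exact_mod_cast hT) hg0)
  have hfraction : (f T - f A) / k ≤ g := by
    rw [div_le_iff₀ (by exact_mod_cast hk)]
    linarith
  have hsplit : (1 - 1 / (k : ℝ)) * (f T - f A) = (f T - f A) - (f T - f A) / k := by ring
  linarith

end Submodular

theorem greedy_submodular_guarantee_general {V : Type*} [DecidableEq V]
    (f : Finset V → ℝ)
    (hempty : f ∅ = 0)
    (hmono : ∀ S T : Finset V, S ⊆ T → f S ≤ f T)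
    (hsub : ∀ S T : Finset V, S ⊆ T → ∀ u ∉ T,
      f (insert u T) - f T ≤ f (insert u S) - f S)
    (k : ℕ) (hk : 0 < k)
    (S : ℕ → Finset V) (hS0 : S 0 = ∅)
    (hgreedy : ∀ i < k, ∃ u ∉ S i, S (i + 1) = insert u (S i) ∧
      ∀ w ∉ S i, f (insert w (S i)) - f (S i) ≤ f (insert u (S i)) - f (S i)) :
    ∀ T : Finset V, T.card ≤ k →
      (1 - (1 - 1 / (k : ℝ)) ^ k) * f T ≤ f (S k) ∧
      (1 - 1 / Real.exp 1) * f T ≤ f (S k) := by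
  intro T hT
  have hk' : (1 : ℝ) ≤ k := by exact_mod_cast hk
  have hq : 0 ≤ 1 - 1 / (k : ℝ) := sub_nonneg.mpr ((div_le_one (by linarith)).mpr hk')
  have hgap : f T - f (S k) ≤ (1 - 1 / (k : ℝ)) ^ k * f T := by
    simpa [hS0, hempty] using le_geom (u := fun i ↦ f T - f (S i)) hq k fun i hi ↦ by
      obtain ⟨u, -, hSi, hmax⟩ := hgreedy i hi
      simpa only [hSi] using sub_insert_le_of_greedy hmono hsub hk hT hmax
  have hpow : (1 - 1 / (k : ℝ)) ^ k ≤ 1 / Real.exp 1 := by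
    simpa [Real.exp_neg] using Real.one_sub_div_pow_le_exp_neg (n := k) (t := 1) hk'
  have hfT : 0 ≤ f T := hempty ▸ hmono ∅ T T.empty_subset
  exact ⟨by linarith, by nlinarith⟩

/-- the `(1 − 1/e)` guarantee for greedy maximization of a nondecreasing
submodular set function with `f(∅) = 0` under a cardinality constraint `k`: the set `S k`
produced by `k` greedy steps satisfies
`f(S k) ≥ (1 − (1 − 1/k)^k) · max_{|T| ≤ k} f(T) ≥ (1 − 1/e) · max_{|T| ≤ k} f(T)`. -/
theorem greedy_submodular_guarantee {V : Type*} [Fintype V] [DecidableEq V]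
    (f : Finset V → ℝ)
    (hempty : f ∅ = 0)
    (hmono : ∀ S T : Finset V, S ⊆ T → f S ≤ f T)
    (hsub : ∀ S T : Finset V, S ⊆ T → ∀ u ∉ T,
      f (insert u T) - f T ≤ f (insert u S) - f S)
    (k : ℕ) (hk : 0 < k)
    (S : ℕ → Finset V) (hS0 : S 0 = ∅)
    (hgreedy : ∀ i < k, ∃ u ∉ S i, S (i + 1) = insert u (S i) ∧
      ∀ w ∉ S i, f (insert w (S i)) - f (S i) ≤ f (insert u (S i)) - f (S i)) :
    ∀ T : Finset V, T.card ≤ k →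
      (1 - (1 - 1 / (k : ℝ)) ^ k) * f T ≤ f (S k) ∧
      (1 - 1 / Real.exp 1) * f T ≤ f (S k) :=
  greedy_submodular_guarantee_general f hempty hmono hsub k hk S hS0 hgreedy
end
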